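/- arXiv:1201.5512 — 2 statements merged into one kernel-verified Lean document; each statement's English description precedes it below -/
import Mathlib

section
/- Let Φ : [0,∞) → [0,∞) be an Orlicz function and define p_Φ := sup{p ≥ 0 : Φ(st) ≤ tᵖ Φ(s) for all t ∈ [0,1] and s ∈ [0,∞)}. Then Φ is of strictly lower type p_Φ, i.e., Φ(st) ≤ t^{p_Φ} Φ(s) for all t ∈ [0,1] and s ∈ [0,∞); in other words, the supremum in the definition of p_Φ is attained. -/
open Set

/-- For an Orlicz function `Φ`, the critical strictly-lower-type index
`p_Φ := sup {p ≥ 0 : Φ(st) ≤ tᵖ Φ(s) for all t ∈ [0,1], s ≥ 0}` is attained: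
`Φ` is of strictly lower type `p_Φ`. -/
theorem stmt_2 (Φ : ℝ → ℝ) (hmono : MonotoneOn Φ (Ici 0)) (h0 : Φ 0 = 0)
    (hpos : ∀ t : ℝ, 0 < t → 0 < Φ t)
    (hinf : Filter.Tendsto Φ Filter.atTop Filter.atTop) :
    ∀ t ∈ Icc (0 : ℝ) 1, ∀ s : ℝ, 0 ≤ s →
      Φ (s * t) ≤
        t ^ (sSup {p : ℝ | 0 ≤ p ∧ ∀ t' ∈ Icc (0 : ℝ) 1, ∀ s' : ℝ, 0 ≤ s' →
          Φ (s' * t') ≤ t' ^ p * Φ s'}) * Φ s := by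
  set S : Set ℝ := {p : ℝ | 0 ≤ p ∧ ∀ t' ∈ Icc (0 : ℝ) 1, ∀ s' : ℝ, 0 ≤ s' →
      Φ (s' * t') ≤ t' ^ p * Φ s'} with hSdef
  intro t ht s hs
  have hΦ0le : ∀ x : ℝ, 0 ≤ x → 0 ≤ Φ x := by
    intro x hx
    calc (0:ℝ) = Φ 0 := h0.symm
    _ ≤ Φ x := hmono (mem_Ici.2 le_rfl) (mem_Ici.2 hx) hx
  have h0S : (0:ℝ) ∈ S := by
    refine ⟨le_rfl, fun t' ht' s' hs' => ?_⟩
    rw [Real.rpow_zero, one_mul]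
    have h1 : s' * t' ≤ s' := by
      nlinarith [ht'.1, ht'.2]
    exact hmono (mem_Ici.2 (mul_nonneg hs' ht'.1)) (mem_Ici.2 hs') h1
  have hne : S.Nonempty := ⟨0, h0S⟩
  have hΦ1 : 0 < Φ 1 := hpos 1 one_pos
  have hΦh : 0 < Φ (1/2) := hpos _ (by norm_num)
  have hbdd : BddAbove S := by
    refine ⟨Real.log (Φ (1/2) / Φ 1) / Real.log (1/2), fun p hp => ?_⟩
    have key := hp.2 (1/2) (by norm_num) 1 (by norm_num)
    rw [one_mul] at key
    have hle : Φ (1/2) / Φ 1 ≤ (1/2 : ℝ) ^ p := by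
      rw [div_le_iff₀ hΦ1]; exact key
    have hlog : Real.log (Φ (1/2) / Φ 1) ≤ p * Real.log (1/2) := by
      have := Real.log_le_log (div_pos hΦh hΦ1) hle
      rwa [Real.log_rpow (by norm_num)] at this
    have hneg : Real.log (1/2 : ℝ) < 0 := by
      apply Real.log_neg <;> norm_num
    rw [le_div_iff_of_neg hneg]
    linarith
  rcases eq_or_lt_of_le ht.1 with hteq | htpos
  · -- t = 0
    rw [← hteq, mul_zero, h0]
    exact mul_nonneg (Real.rpow_nonneg le_rfl _) (hΦ0le s hs)
  · -- t > 0
    obtain ⟨u, -, hutend, humem⟩ := exists_seq_tendsto_sSup hne hbdd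
    have hcont : Filter.Tendsto (fun n => t ^ (u n) * Φ s) Filter.atTop
        (nhds (t ^ sSup S * Φ s)) := by
      exact (((Real.continuousAt_const_rpow (ne_of_gt htpos)).tendsto.comp
        hutend).mul_const _)
    refine ge_of_tendsto' hcont (fun n => ?_)
    exact (humem n).2 t ht s hs
end

section
/- Let f ∈ L²(ℝⁿ), γ ∈ (0,1), and let u(x,t) := e^{-t√L}f(x) where L = -Δ+V with 0 ≤ V ∈ L¹_loc(ℝⁿ), so that Lu - ∂²_t u = 0 on the upper half-space. Suppose the Moser-type local boundedness estimate holds: sup_{Y ∈ B(Y₀,r)} |u(Y)| ≤ C(n,γ) ( r^{-(n+1)} ∫_{B(Y₀,2r)} |u(Y)|^γ dY )^{1/γ} for weak solutions. Then for all x ∈ ℝⁿ, the aperture-1/4 non-tangential maximal function satisfies 𝒩_P^{1/4}(f)(x) ≤ C { ℳ( [ℛ_P(f)]^γ )(x) }^{1/γ}, where ℳ is the Hardy–Littlewood maximal operator and ℛ_P(f)(x) := sup_{t>0} |e^{-t√L}f(x)|. -/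
open MeasureTheory Metric Set ENNReal

/-- The uncentered Hardy–Littlewood maximal function on `ℝⁿ` (with supremum-norm
balls) of an `ℝ≥0∞`-valued function. -/
noncomputable def uncMax (nn : ℕ) (g : (Fin nn → ℝ) → ℝ≥0∞) (x : Fin nn → ℝ) : ℝ≥0∞ :=
  ⨆ (c : Fin nn → ℝ) (r : ℝ) (_ : 0 < r) (_ : x ∈ ball c r),
    (volume (ball c r))⁻¹ * ∫⁻ z in ball c r, g z

/-! At a point `(y, t)` of the cone `|y - x| < t/4`, apply the Moser estimate on the ball of
radius `t/4`. The doubled ball `B((y,t), t/2)` stays in the upper half-space and is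
`B(y, t/2) × (t/2, 3t/2)`; on it `|u|^γ` is bounded by `(ℛ_P f)^γ` of the first coordinate, so the
`γ`-mean of `|u|` over it is at most a dimensional constant times the mean of `(ℛ_P f)^γ` over
`B(y, t/2)`, a ball containing `x`. -/

noncomputable def radialMax {α E : Type*} [NormedAddCommGroup E] (u : α × ℝ → E) (z : α) :
    ℝ≥0∞ :=
  ⨆ (t : ℝ) (_ : 0 < t), ‖u (z, t)‖ₑ

lemma enorm_le_radialMax {α E : Type*} [NormedAddCommGroup E] (u : α × ℝ → E) {Z : α × ℝ}
    (hZ : 0 < Z.2) : ‖u Z‖ₑ ≤ radialMax u Z.1 :=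
  le_iSup₂_of_le (f := fun t (_ : 0 < t) => ‖u (Z.1, t)‖ₑ) Z.2 hZ le_rfl

lemma snd_pos_of_mem_ball {α : Type*} [PseudoMetricSpace α] {y : α} {t ρ : ℝ} {Z : α × ℝ}
    (hZ : Z ∈ ball (y, t) ρ) (hρ : ρ ≤ t) : 0 < Z.2 := by
  have h : dist Z.2 t < ρ := (le_max_right _ _).trans_lt (mem_ball.1 hZ)
  linarith [(abs_lt.1 (Real.dist_eq Z.2 t ▸ h)).1]

lemma setLIntegral_ball_le_volume_mul_uncMax {nn : ℕ} (g : (Fin nn → ℝ) → ℝ≥0∞)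
    {c x : Fin nn → ℝ} {r : ℝ} (hr : 0 < r) (hx : x ∈ ball c r) :
    ∫⁻ z in ball c r, g z ≤ volume (ball c r) * uncMax nn g x := by
  rw [← ENNReal.inv_mul_le_iff (measure_ball_pos volume c hr).ne' measure_ball_lt_top.ne]
  exact le_iSup_of_le c <| le_iSup_of_le r <| le_iSup_of_le hr <| le_iSup_of_le hx le_rfl

lemma setLIntegral_ball_prod_fst_le {α β : Type*} [PseudoMetricSpace α] [PseudoMetricSpace β]
    [MeasureSpace α] [MeasureSpace β] [SFinite (volume : Measure α)]
    [SFinite (volume : Measure β)] (g : α → ℝ≥0∞) (y : α) (t : β) {ρ : ℝ}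
    (hρ : volume (ball t ρ) ≠ ⊤) :
    ∫⁻ Z in ball (y, t) ρ, g Z.1 ≤ (∫⁻ z in ball y ρ, g z) * volume (ball t ρ) := by
  rw [← ball_prod_same, Measure.volume_eq_prod, ← Measure.prod_restrict]
  calc ∫⁻ Z, g Z.1 ∂(volume.restrict (ball y ρ)).prod (volume.restrict (ball t ρ))
      ≤ ∫⁻ z in ball y ρ, ∫⁻ _ in ball t ρ, g z := lintegral_prod_le _
    _ = (∫⁻ z in ball y ρ, g z) * volume (ball t ρ) := by
      simp_rw [setLIntegral_const]
      exact lintegral_mul_const' _ _ hρ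

lemma setLIntegral_ball_rpow_le_radialMax {α E : Type*} [PseudoMetricSpace α] [MeasureSpace α]
    [OpensMeasurableSpace α] [SFinite (volume : Measure α)] [NormedAddCommGroup E] (u : α × ℝ → E) {γ : ℝ} (hγ : 0 ≤ γ)
    (y : α) {t : ℝ} (ht : 0 < t) :
    ∫⁻ Z in ball (y, t) (t / 2), ‖u Z‖ₑ ^ γ
      ≤ (∫⁻ z in ball y (t / 2), radialMax u z ^ γ) * ENNReal.ofReal t :=
  calc ∫⁻ Z in ball (y, t) (t / 2), ‖u Z‖ₑ ^ γ
      ≤ ∫⁻ Z in ball (y, t) (t / 2), radialMax u Z.1 ^ γ :=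
        setLIntegral_mono' measurableSet_ball fun Z hZ =>
          ENNReal.rpow_le_rpow (enorm_le_radialMax u (snd_pos_of_mem_ball hZ (by linarith))) hγ
    _ ≤ _ := by
      have hvol : volume (ball t (t / 2)) = ENNReal.ofReal t := by
        rw [Real.volume_ball]; ring_nf
      rw [← hvol]
      exact setLIntegral_ball_prod_fst_le _ y t (hvol ▸ ofReal_ne_top)

lemma rpow_le_mul_of_le_mul_rpow_one_div {a C X γ : ℝ} (ha : 0 ≤ a) (hC : 0 ≤ C) (hX : 0 ≤ X)
    (hγ : 0 < γ) (h : a ≤ C * X ^ (1 / γ)) : a ^ γ ≤ C ^ γ * X := by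
  calc a ^ γ ≤ (C * X ^ (1 / γ)) ^ γ := Real.rpow_le_rpow ha h hγ.le
    _ = C ^ γ * X := by
      rw [Real.mul_rpow hC (Real.rpow_nonneg hX _), ← Real.rpow_mul hX, one_div_mul_cancel hγ.ne',
        Real.rpow_one]

/-- No integrability is needed: a non-integrable Bochner integral is `0`. -/
lemma enorm_rpow_le_of_le_mul_setIntegral_rpow {X E F : Type*} [MeasurableSpace X]
    {μ : Measure X} [NormedAddCommGroup E] [NormedAddCommGroup F] {f : X → E} {s : Set X}
    {a : F} {C c γ : ℝ} (hC : 0 ≤ C) (hc : 0 ≤ c) (hγ : 0 < γ)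
    (h : ‖a‖ ≤ C * (c * ∫ Z in s, ‖f Z‖ ^ γ ∂μ) ^ (1 / γ)) :
    ‖a‖ₑ ^ γ ≤ ENNReal.ofReal (C ^ γ * c) * ∫⁻ Z in s, ‖f Z‖ₑ ^ γ ∂μ := by
  have hnonneg : ∀ Z, 0 ≤ ‖f Z‖ ^ γ := fun Z => Real.rpow_nonneg (norm_nonneg _) γ
  have hI : 0 ≤ ∫ Z in s, ‖f Z‖ ^ γ ∂μ := integral_nonneg hnonneg
  have hint : ENNReal.ofReal (∫ Z in s, ‖f Z‖ ^ γ ∂μ) ≤ ∫⁻ Z in s, ‖f Z‖ₑ ^ γ ∂μ := by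
    rw [← Real.enorm_eq_ofReal hI]
    refine (enorm_integral_le_lintegral_enorm _).trans_eq (lintegral_congr fun Z => ?_)
    rw [Real.enorm_eq_ofReal (hnonneg Z), ← ofReal_norm, ofReal_rpow_of_nonneg (norm_nonneg _) hγ.le]
  calc ‖a‖ₑ ^ γ = ENNReal.ofReal (‖a‖ ^ γ) := by
        rw [← ofReal_norm, ofReal_rpow_of_nonneg (norm_nonneg _) hγ.le]
    _ ≤ ENNReal.ofReal (C ^ γ * c * ∫ Z in s, ‖f Z‖ ^ γ ∂μ) := by
        rw [mul_assoc]
        exact ofReal_le_ofReal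
          (rpow_le_mul_of_le_mul_rpow_one_div (norm_nonneg _) hC (mul_nonneg hc hI) hγ h)
    _ ≤ ENNReal.ofReal (C ^ γ * c) * ∫⁻ Z in s, ‖f Z‖ₑ ^ γ ∂μ := by
        rw [ENNReal.ofReal_mul (by positivity)]
        gcongr

lemma rpow_neg_succ_mul_pow_mul_self (nn : ℕ) {t : ℝ} (ht : 0 < t) :
    (t / 4) ^ (-(nn + 1 : ℝ)) * (t ^ nn * t) = 4 ^ (nn + 1) := by
  rw [show (-(nn + 1 : ℝ)) = -((nn + 1 : ℕ) : ℝ) by push_cast; ring,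
    Real.rpow_neg (by positivity), Real.rpow_natCast, div_pow]
  field_simp
  ring

/-- If `u(y,t) = e^{-t√L}f(y)` satisfies the Moser-type local boundedness estimate on
balls of the upper half-space `ℝ^{n+1}₊`, then the aperture-`1/4` non-tangential
maximal function is pointwise dominated by
`C (ℳ([ℛ_P f]^γ))^{1/γ}`, where `ℛ_P f(z) = sup_{t>0}|u(z,t)|`. -/
theorem stmt_17 (nn : ℕ) (γ : ℝ) (hγ : 0 < γ ∧ γ < 1)
    (u : ((Fin nn → ℝ) × ℝ) → ℂ) (Cm : ℝ) (hCm : 0 < Cm)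
    (hMoser : ∀ (Y₀ : (Fin nn → ℝ) × ℝ) (r : ℝ), 0 < r →
      ball Y₀ (2 * r) ⊆ {w : (Fin nn → ℝ) × ℝ | 0 < w.2} →
      ∀ Y ∈ ball Y₀ r,
        ‖u Y‖ ≤ Cm * (r ^ (-(nn + 1 : ℝ)) * ∫ Z in ball Y₀ (2 * r), ‖u Z‖ ^ γ) ^ (1/γ)) :
    ∃ C : ℝ≥0∞, 0 < C ∧ C ≠ ⊤ ∧ ∀ x : Fin nn → ℝ,
      (⨆ (t : ℝ) (_ : 0 < t) (y : Fin nn → ℝ) (_ : dist y x < t / 4),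
          (‖u (y, t)‖₊ : ℝ≥0∞)) ≤
        C * (uncMax nn
            (fun z => (⨆ (t : ℝ) (_ : 0 < t), (‖u (z, t)‖₊ : ℝ≥0∞)) ^ γ) x) ^ (1/γ) := by
  obtain ⟨hγ0, -⟩ := hγ
  set K := ENNReal.ofReal (Cm ^ γ * 4 ^ (nn + 1))
  have hK : 0 < K := ENNReal.ofReal_pos.2 (by positivity)
  refine ⟨K ^ (1 / γ), ENNReal.rpow_pos hK ofReal_ne_top,
    rpow_ne_top_of_nonneg (by positivity) ofReal_ne_top, fun x => ?_⟩
  refine iSup_le fun t => iSup_le fun ht => iSup_le fun y => iSup_le fun hyx => ?_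
  rw [← ENNReal.mul_rpow_of_nonneg _ _ (by positivity), one_div, ENNReal.le_rpow_inv_iff hγ0]
  have hx : x ∈ ball y (t / 2) := mem_ball_comm.1 (mem_ball.2 (by linarith))
  have hMoser_yt := hMoser (y, t) (t / 4) (by positivity)
    (fun Z hZ => snd_pos_of_mem_ball hZ (by linarith)) (y, t) (mem_ball_self (by positivity))
  rw [show 2 * (t / 4) = t / 2 by ring] at hMoser_yt
  calc ‖u (y, t)‖ₑ ^ γ
      ≤ ENNReal.ofReal (Cm ^ γ * (t / 4) ^ (-(nn + 1 : ℝ))) *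
          ∫⁻ Z in ball (y, t) (t / 2), ‖u Z‖ₑ ^ γ :=
        enorm_rpow_le_of_le_mul_setIntegral_rpow hCm.le (by positivity) hγ0 hMoser_yt
    _ ≤ ENNReal.ofReal (Cm ^ γ * (t / 4) ^ (-(nn + 1 : ℝ))) *
          ((volume (ball y (t / 2)) * uncMax nn (fun z => radialMax u z ^ γ) x) *
            ENNReal.ofReal t) := by
        grw [setLIntegral_ball_rpow_le_radialMax u hγ0.le y ht,
          setLIntegral_ball_le_volume_mul_uncMax _ (by positivity) hx]
    _ = K * uncMax nn (fun z => radialMax u z ^ γ) x := by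
        rw [Real.volume_pi_ball _ (by positivity), Fintype.card_fin, show 2 * (t / 2) = t by ring,
          mul_right_comm _ (uncMax _ _ _), ← mul_assoc, ← ENNReal.ofReal_mul (by positivity),
          ← ENNReal.ofReal_mul (by positivity), mul_assoc, rpow_neg_succ_mul_pow_mul_self nn ht]
end
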